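/- Let X be a real normed vector space, Y a rational vector space, f : X → Y, s ≥ 1, and B = {x ∈ X : ‖x‖ < ε} for some ε > 0. If Δ_h^s f(x) = 0 for all x ∈ X and all h ∈ B, then Δ_{h_1} ⋯ Δ_{h_s} f(x) = 0 for all x, h_1, ..., h_s ∈ X. -/

import Mathlib

/-- The difference operator `Δ_h f (x) = f (x + h) - f x`. -/
def dd {X Y : Type*} [Add X] [Sub Y] (h : X) (f : X → Y) : X → Y :=
  fun x => f (x + h) - f x

/-- Iterated difference `Δ_{h₁}(Δ_{h₂ ⋯ hₛ} f)` for a list of steps. -/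
def ddIter {X Y : Type*} [Add X] [Sub Y] (hs : List X) (f : X → Y) : X → Y :=
  hs.foldr dd f

open Finset

/-!
Let `ψ v` be the image of `v` in the group algebra `ℚ[X]`, acting on functions `X → Y` by
translation, so that `Δ_h = ψ h - 1`. Since `ψ (2v) - 1 = (ψ v + 1) (ψ v - 1)`, if `(ψ v - 1)^s`
annihilates `f` for all small `v`, then it does so for all `v`.

The heart of the matter is that, over `ℚ`, the ideal generated by all `n`-th powers `(ψ v - 1)^n`
contains every product `(ψ h₁ - 1) ⋯ (ψ hₙ - 1)`. By induction on `n` it suffices that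
`(a - 1)^m (b - 1) = 0` for `a = ψ w`, `b = ψ u` modulo the ideal `J` of `(m+1)`-st powers.
Modulo `J`, the `m`-th difference in `j` of `(aʲ b - 1)^(m+1)` vanishes; expanding it and using
`(aⁱ - 1)^m = iᵐ (a - 1)^m` gives `(a - 1)^m P(b) = 0`, where
`P(b) = ∑ᵢ ± C(m+1, i) iᵐ bⁱ = (m+1)! (b - 1) + (b - 1)² Q` by the classical alternating sums
`∑ᵢ ± C(n, i) iʲ`. Finally `(m+1)! + (b - 1) Q` is a unit since `b - 1` is nilpotent mod `J`.
-/

section CommRing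
variable {R : Type*} [CommRing R]

theorem sum_range_neg_one_pow_mul_choose_mul_pow_eq_fwdDiff_iter (n j : ℕ) :
    ∑ k ∈ range (n + 1), (-1 : R) ^ (k + n) * n.choose k * (k : R) ^ j
      = (fwdDiff 1)^[n] (fun r : R => r ^ j) 0 := by
  rw [fwdDiff_iter_eq_sum_shift]
  refine sum_congr rfl fun k hk => ?_
  have hk : k ≤ n := Nat.lt_succ_iff.mp (mem_range.mp hk)
  rw [zsmul_eq_mul, zero_add, nsmul_one, show k + n = n - k + 2 * k by omega, pow_add, pow_mul]
  push_cast
  ring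

theorem sub_one_dvd_geom_sum_sub (a : R) (i : ℕ) : a - 1 ∣ ∑ t ∈ range i, a ^ t - i := by
  have : ∑ t ∈ range i, a ^ t - i = ∑ t ∈ range i, (a ^ t - 1) := by simp
  rw [this]
  exact dvd_sum fun t _ => by simpa using sub_dvd_pow_sub_pow a 1 t

theorem sub_one_pow_succ_dvd_pow_sub_one_pow_sub (a : R) (i m : ℕ) :
    (a - 1) ^ (m + 1) ∣ (a ^ i - 1) ^ m - (i : R) ^ m * (a - 1) ^ m := by
  obtain ⟨r, hr⟩ := (sub_one_dvd_geom_sum_sub a i).trans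
    (sub_dvd_pow_sub_pow (∑ t ∈ range i, a ^ t) (i : R) m)
  refine ⟨r, ?_⟩
  rw [← mul_geom_sum, mul_pow]
  linear_combination (a - 1) ^ m * hr

theorem sub_one_sq_dvd_pow_sub (b : R) (i : ℕ) :
    (b - 1) ^ 2 ∣ b ^ i - 1 - i * (b - 1) := by
  obtain ⟨r, hr⟩ := sub_one_dvd_geom_sum_sub b i
  exact ⟨r, by linear_combination (b - 1) * hr - mul_geom_sum b i⟩

theorem sum_neg_one_pow_mul_choose_mul_pow_mul_sub_one_pow (a b : R) (m : ℕ) :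
    ∑ j ∈ range (m + 1), (-1 : R) ^ (j + m) * m.choose j * (a ^ j * b - 1) ^ (m + 1)
      = ∑ i ∈ range (m + 2),
          (-1 : R) ^ (i + (m + 1)) * (m + 1).choose i * (a ^ i - 1) ^ m * b ^ i := by
  simp only [sub_pow _ (1 : R), one_pow, mul_one, mul_sum, sum_mul]
  rw [sum_comm]
  refine sum_congr rfl fun i _ => sum_congr rfl fun j _ => ?_
  ring

theorem sub_one_sq_dvd_sum_neg_one_pow_mul_choose_mul_pow_sub (b : R) (m : ℕ) :
    (b - 1) ^ 2 ∣ ∑ i ∈ range (m + 2),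
      (-1 : R) ^ (i + (m + 1)) * (m + 1).choose i * (i : R) ^ m * b ^ i
        - ((m + 1).factorial : R) * (b - 1) := by
  have h0 := sum_range_neg_one_pow_mul_choose_mul_pow_eq_fwdDiff_iter (R := R) (m + 1) m
  have h1 := sum_range_neg_one_pow_mul_choose_mul_pow_eq_fwdDiff_iter (R := R) (m + 1) (m + 1)
  rw [fwdDiff_iter_pow_eq_zero_of_lt (Nat.lt_succ_self m), Pi.zero_apply] at h0
  rw [fwdDiff_iter_eq_factorial, Pi.natCast_apply] at h1
  refine (dvd_sum (s := range (m + 2)) fun i _ => dvd_mul_of_dvd_right (sub_one_sq_dvd_pow_sub b i)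
    ((-1 : R) ^ (i + (m + 1)) * (m + 1).choose i * (i : R) ^ m)).trans (dvd_of_eq ?_)
  rw [← h1, sum_mul]
  simp only [mul_sub, mul_one, sum_sub_distrib, h0, sub_zero]
  congr 1
  rw [← sum_sub_distrib, ← sum_sub_distrib]
  exact sum_congr rfl fun i _ => by ring

theorem sub_one_pow_mul_sub_one_eq_zero [Algebra ℚ R] {a b : R} {m : ℕ}
    (ha : (a - 1) ^ (m + 1) = 0) (hab : ∀ j : ℕ, (a ^ j * b - 1) ^ (m + 1) = 0) :
    (a - 1) ^ m * (b - 1) = 0 := by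
  have hP : (a - 1) ^ m * ∑ i ∈ range (m + 2),
      (-1 : R) ^ (i + (m + 1)) * (m + 1).choose i * (i : R) ^ m * b ^ i = 0 := by
    have h := sum_neg_one_pow_mul_choose_mul_pow_mul_sub_one_pow a b m
    simp only [hab, mul_zero, sum_const_zero] at h
    rw [h, mul_sum]
    refine sum_congr rfl fun i _ => ?_
    obtain ⟨r, hr⟩ := sub_one_pow_succ_dvd_pow_sub_one_pow_sub a i m
    rw [ha, zero_mul, sub_eq_zero] at hr
    rw [hr]
    ring
  obtain ⟨Q, hQ⟩ := sub_one_sq_dvd_sum_neg_one_pow_mul_choose_mul_pow_sub b m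
  have hnil : IsNilpotent ((b - 1) * Q) :=
    (Commute.all _ _).isNilpotent_mul_right ⟨m + 1, by simpa using hab 0⟩
  have hfac : IsUnit ((m + 1).factorial : R) := by
    simpa using
      ((Nat.cast_ne_zero (R := ℚ)).2 (m + 1).factorial_ne_zero).isUnit.map (algebraMap ℚ R)
  refine (hnil.isUnit_add_left_of_commute hfac (Commute.all _ _)).mul_left_eq_zero.mp ?_
  linear_combination hP - (a - 1) ^ m * hQ

end CommRing

section DiffPowIdeal
variable {X R : Type*} [AddCommMonoid X] [CommRing R]

def diffPowIdeal (ψ : AddChar X R) (n : ℕ) : Ideal R :=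
  Ideal.span (Set.range fun v => (ψ v - 1) ^ n)

variable [Algebra ℚ R] (ψ : AddChar X R)

theorem sub_one_pow_mul_sub_one_mem_diffPowIdeal (m : ℕ) (w u : X) :
    (ψ w - 1) ^ m * (ψ u - 1) ∈ diffPowIdeal ψ (m + 1) := by
  have hgen : ∀ v, Ideal.Quotient.mk (diffPowIdeal ψ (m + 1)) ((ψ v - 1) ^ (m + 1)) = 0 :=
    fun v => Ideal.Quotient.eq_zero_iff_mem.2 (Ideal.subset_span ⟨v, rfl⟩)
  rw [← Ideal.Quotient.eq_zero_iff_mem]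
  simp only [map_mul, map_pow, map_sub, map_one] at hgen ⊢
  refine sub_one_pow_mul_sub_one_eq_zero (hgen w) fun j => ?_
  rw [← map_pow, ← map_mul, ← AddChar.map_nsmul_eq_pow, ← AddChar.map_add_eq_mul]
  exact hgen _

theorem mul_sub_one_mem_diffPowIdeal {m : ℕ} {r : R} (hr : r ∈ diffPowIdeal ψ m) (u : X) :
    r * (ψ u - 1) ∈ diffPowIdeal ψ (m + 1) := by
  induction hr using Submodule.span_induction with
  | mem x hx =>
    obtain ⟨w, rfl⟩ := hx
    exact sub_one_pow_mul_sub_one_mem_diffPowIdeal ψ m w u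
  | zero => simp
  | add x y _ _ hx hy => rw [add_mul]; exact add_mem hx hy
  | smul c x _ hx => rw [smul_eq_mul, mul_assoc]; exact Ideal.mul_mem_left _ c hx

theorem list_prod_map_sub_one_mem_diffPowIdeal (l : List X) :
    (l.map fun h => ψ h - 1).prod ∈ diffPowIdeal ψ l.length := by
  induction l with
  | nil => exact Ideal.subset_span ⟨0, by simp⟩
  | cons u l ih =>
    rw [List.map_cons, List.prod_cons, mul_comm]
    exact mul_sub_one_mem_diffPowIdeal ψ ih u

end DiffPowIdeal

theorem AddChar.sub_one_pow_mem_of_forall_norm_lt {X R : Type*} [NormedAddCommGroup X]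
    [NormedSpace ℝ X] [CommRing R] (ψ : AddChar X R) {I : Ideal R} {s : ℕ} {ε : ℝ}
    (hε : 0 < ε)
    (h : ∀ v : X, ‖v‖ < ε → (ψ v - 1) ^ s ∈ I) (v : X) : (ψ v - 1) ^ s ∈ I := by
  have hdouble : ∀ n : ℕ, ∀ v : X, ‖v‖ < 2 ^ n * ε → (ψ v - 1) ^ s ∈ I := by
    intro n
    induction n with
    | zero => simpa using h
    | succ n ih =>
      intro v hv
      obtain ⟨w, rfl⟩ : ∃ w, v = w + w :=
        ⟨(2⁻¹ : ℝ) • v, by rw [← two_smul ℝ, smul_inv_smul₀ two_ne_zero]⟩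
      rw [← two_smul ℝ w, norm_smul, Real.norm_two, pow_succ] at hv
      have hfactor : ψ (w + w) - 1 = (ψ w + 1) * (ψ w - 1) := by
        rw [AddChar.map_add_eq_mul]; ring
      rw [hfactor, mul_pow]
      exact Ideal.mul_mem_left _ _ (ih w (by linarith))
  obtain ⟨n, hn⟩ := pow_unbounded_of_one_lt (‖v‖ / ε) one_lt_two
  exact hdouble n v (by rwa [div_lt_iff₀ hε] at hn)

section Translation
variable {X Y : Type*} [AddMonoid X] [AddCommGroup Y] [Module ℚ Y]

def translation : AddChar X (Module.End ℚ (X → Y)) where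
  toFun v := LinearMap.funLeft ℚ Y (· + v)
  map_zero_eq_one' := by ext; simp
  map_add_eq_mul' v w := by ext; simp [add_assoc]

variable (X Y) in
noncomputable def translationAlgHom : AddMonoidAlgebra ℚ X →ₐ[ℚ] Module.End ℚ (X → Y) :=
  AddMonoidAlgebra.lift ℚ _ X translation.toMonoidHom

variable (X) in
noncomputable def AddMonoidAlgebra.ofAddChar : AddChar X (AddMonoidAlgebra ℚ X) :=
  AddChar.toMonoidHomEquiv.symm (AddMonoidAlgebra.of ℚ X)

theorem translationAlgHom_ofAddChar_sub_one (v : X) (f : X → Y) :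
    translationAlgHom X Y (AddMonoidAlgebra.ofAddChar X v - 1) f = dd v f := by
  ext x
  simp [translationAlgHom, AddMonoidAlgebra.ofAddChar, translation, dd]

theorem translationAlgHom_ofAddChar_sub_one_pow (v : X) (f : X → Y) (n : ℕ) :
    translationAlgHom X Y ((AddMonoidAlgebra.ofAddChar X v - 1) ^ n) f = (dd v)^[n] f := by
  induction n with
  | zero => rw [pow_zero, map_one]; rfl
  | succ n ih =>
    rw [Function.iterate_succ_apply', pow_succ', map_mul, Module.End.mul_apply, ih,
      translationAlgHom_ofAddChar_sub_one]

theorem translationAlgHom_list_prod (l : List X) (f : X → Y) :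
    translationAlgHom X Y (l.map fun h => AddMonoidAlgebra.ofAddChar X h - 1).prod f
      = ddIter l f := by
  induction l with
  | nil => rw [List.map_nil, List.prod_nil, map_one]; rfl
  | cons u l ih =>
    rw [List.map_cons, List.prod_cons, map_mul, Module.End.mul_apply, ih,
      translationAlgHom_ofAddChar_sub_one]
    rfl

def translationAnnihilator (f : X → Y) : Ideal (AddMonoidAlgebra ℚ X) where
  carrier := {r | translationAlgHom X Y r f = 0}
  add_mem' ha hb := by simp_all
  zero_mem' := by simp
  smul_mem' c r hr := by simp_all

end Translation

theorem stmt10_general {X Y : Type*} [NormedAddCommGroup X] [NormedSpace ℝ X]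
    [AddCommGroup Y] [Module ℚ Y]
    (f : X → Y) (s : ℕ) (ε : ℝ) (hε : 0 < ε)
    (H : ∀ x : X, ∀ h : X, ‖h‖ < ε → (dd h)^[s] f x = 0) :
    ∀ (x : X) (h : Fin s → X), ddIter (List.ofFn h) f x = 0 := by
  intro x h
  set ψ := AddMonoidAlgebra.ofAddChar X
  have hsmall : ∀ v : X, ‖v‖ < ε → (ψ v - 1) ^ s ∈ translationAnnihilator f :=
    fun v hv => (translationAlgHom_ofAddChar_sub_one_pow v f s).trans (funext (H · v hv))
  have hle : diffPowIdeal ψ s ≤ translationAnnihilator f :=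
    Ideal.span_le.2 <| Set.range_subset_iff.2 (ψ.sub_one_pow_mem_of_forall_norm_lt hε hsmall)
  have hprod := list_prod_map_sub_one_mem_diffPowIdeal ψ (List.ofFn h)
  rw [List.length_ofFn] at hprod
  rw [← translationAlgHom_list_prod]
  exact congrFun (hle hprod) x

theorem stmt10 {X Y : Type*} [NormedAddCommGroup X] [NormedSpace ℝ X]
    [AddCommGroup Y] [Module ℚ Y]
    (f : X → Y) (s : ℕ) (hs : 1 ≤ s) (ε : ℝ) (hε : 0 < ε)
    (H : ∀ x : X, ∀ h : X, ‖h‖ < ε → (dd h)^[s] f x = 0) :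
    ∀ (x : X) (h : Fin s → X), ddIter (List.ofFn h) f x = 0 :=
  stmt10_general f s ε hε H
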